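/- If a finite simplicial complex K collapses to a subcomplex L (in the classical sense of free-face collapses), then the barycentric subdivision K' 1-collapses to L'. In particular, if K is collapsible then K' is 1-collapsible, and hence non-evasive. -/

import Mathlib

/- Theory of strong homotopy types of finite simplicial complexes
   (Barmak–Minian), basic definitions. -/

open Classical

namespace StrongHomotopy

/-- A finite abstract simplicial complex with vertices from the ambient type `V`:
a finite family of nonempty finite subsets of `V`, closed under nonempty subsets.
(All singletons of vertices actually used are faces, by downward closure.) -/
structure Cplx (V : Type) where
  faces : Finset (Finset V)
  nonempty_of_mem : ∀ ⦃σ : Finset V⦄, σ ∈ faces → σ.Nonempty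
  down_closed : ∀ ⦃σ τ : Finset V⦄, σ ∈ faces → τ ⊆ σ → τ.Nonempty → τ ∈ faces

variable {V W : Type}

/-- `v` is a vertex of `K`. -/
def IsVertex (K : Cplx V) (v : V) : Prop := {v} ∈ K.faces

noncomputable section

/-- The set of faces of the link of `v` in `K`. -/
def link (K : Cplx V) (v : V) : Finset (Finset V) :=
  K.faces.filter fun σ => v ∉ σ ∧ insert v σ ∈ K.faces

/-- A family of faces is a simplicial cone with apex `a`. -/
def IsConeWithApex (F : Finset (Finset V)) (a : V) : Prop :=
  {a} ∈ F ∧ ∀ σ ∈ F, insert a σ ∈ F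

/-- A family of faces is a simplicial cone. -/
def IsCone (F : Finset (Finset V)) : Prop := ∃ a, IsConeWithApex F a

/-- `v` is dominated by `v'` in `K`: the link of `v` is a cone with apex `v'`. -/
def DominatedBy (K : Cplx V) (v v' : V) : Prop := IsConeWithApex (link K v) v'

/-- `v` is a dominated vertex of `K`: its link is a simplicial cone. -/
def Dominated (K : Cplx V) (v : V) : Prop := IsCone (link K v)

/-- Deletion `K ∖ v`: the full subcomplex spanned by the vertices other than `v`. -/
def delete (K : Cplx V) (v : V) : Cplx V where
  faces := K.faces.filter fun σ => v ∉ σ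
  nonempty_of_mem := fun σ h => K.nonempty_of_mem (Finset.mem_filter.mp h).1
  down_closed := by
    intro σ τ hσ hsub hne
    rw [Finset.mem_filter] at hσ ⊢
    exact ⟨K.down_closed hσ.1 hsub hne, fun hv => hσ.2 (hsub hv)⟩

/-- The link of a vertex, as a simplicial complex. -/
def linkCplx (K : Cplx V) (v : V) : Cplx V where
  faces := link K v
  nonempty_of_mem := fun σ h => K.nonempty_of_mem (Finset.mem_filter.mp h).1
  down_closed := by
    intro σ τ hσ hsub hne
    simp only [link, Finset.mem_filter] at hσ ⊢
    refine ⟨K.down_closed hσ.1 hsub hne, fun hv => hσ.2.1 (hsub hv), ?_⟩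
    exact K.down_closed hσ.2.2 (Finset.insert_subset_insert v hsub)
      ⟨v, Finset.mem_insert_self v τ⟩

/-- Elementary strong collapse: deletion of a dominated vertex. -/
def ElemStrongCollapse (K L : Cplx V) : Prop := ∃ v, Dominated K v ∧ L = delete K v

/-- `K` strong collapses to `L` (a sequence of elementary strong collapses). -/
def StrongCollapses : Cplx V → Cplx V → Prop := Relation.ReflTransGen ElemStrongCollapse

/-- The complex with a single vertex `v`. -/
def pt (v : V) : Cplx V where
  faces := {{v}}
  nonempty_of_mem := by
    intro σ h
    rw [Finset.mem_singleton] at h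
    subst h
    exact ⟨v, Finset.mem_singleton_self v⟩
  down_closed := by
    intro σ τ hσ hsub hne
    rw [Finset.mem_singleton] at hσ ⊢
    subst hσ
    rcases Finset.subset_singleton_iff.mp hsub with h | h
    · exact absurd h (Finset.nonempty_iff_ne_empty.mp hne)
    · exact h

/-- `K` is strong collapsible: it strong collapses to a single vertex. -/
def StrongCollapsible (K : Cplx V) : Prop := ∃ v, StrongCollapses K (pt v)

/-- A minimal complex: no dominated vertices. -/
def MinimalCplx (K : Cplx V) : Prop := ∀ v, ¬ Dominated K v

/-- A vertex map is simplicial if it sends faces to faces. -/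
def IsSimplicial (K : Cplx V) (L : Cplx W) (f : V → W) : Prop :=
  ∀ σ ∈ K.faces, σ.image f ∈ L.faces

/-- Two vertex maps are contiguous. -/
def Contiguous (K : Cplx V) (L : Cplx W) (f g : V → W) : Prop :=
  ∀ σ ∈ K.faces, σ.image f ∪ σ.image g ∈ L.faces

/-- `f` and `g` lie in the same contiguity class: they are joined by
a finite chain of (pairwise contiguous) maps. -/
def ContigClass (K : Cplx V) (L : Cplx W) : (V → W) → (V → W) → Prop :=
  Relation.ReflTransGen (Contiguous K L)

/-- A strong equivalence of simplicial complexes. -/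
def StrongEquiv (K : Cplx V) (L : Cplx W) (f : V → W) : Prop :=
  IsSimplicial K L f ∧ ∃ g : W → V, IsSimplicial L K g ∧
    ContigClass K K (g ∘ f) id ∧ ContigClass L L (f ∘ g) id

/-- `f` is a simplicial isomorphism from `K` to `L`: a simplicial map,
injective on vertices, inducing a bijection on faces. -/
def IsIsoMap (K : Cplx V) (L : Cplx W) (f : V → W) : Prop :=
  IsSimplicial K L f ∧ Set.InjOn f {v | IsVertex K v} ∧
    K.faces.image (fun σ => σ.image f) = L.faces

/-- `K` and `L` are simplicially isomorphic. -/
def Isomorphic (K : Cplx V) (L : Cplx W) : Prop := ∃ f, IsIsoMap K L f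

/-- `L` is a subcomplex of `K`. -/
def Subcplx (L K : Cplx V) : Prop := L.faces ⊆ K.faces

/-- `L` is a full subcomplex of `K`. -/
def IsFullSub (L K : Cplx V) : Prop :=
  L.faces ⊆ K.faces ∧ ∀ σ ∈ K.faces, (∀ v ∈ σ, IsVertex L v) → σ ∈ L.faces

/-- `K₀` is a core of `K`: a minimal complex to which `K` strong collapses. -/
def IsCore (K K₀ : Cplx V) : Prop := MinimalCplx K₀ ∧ StrongCollapses K K₀

/-- Same strong homotopy type: joined by a finite sequence of strong collapses,
strong expansions and simplicial isomorphisms. (In the abstract setting, where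
new vertices may be created freely, isomorphisms are generated by collapses and
expansions; over a fixed ambient vertex type they must be added as moves.) -/
def SameSHT (K L : Cplx V) : Prop :=
  Relation.ReflTransGen
    (fun A B => ElemStrongCollapse A B ∨ ElemStrongCollapse B A ∨ Isomorphic A B) K L

/-- `K` is vertex-homogeneous: its automorphism group acts transitively on vertices. -/
def VertexHomog (K : Cplx V) : Prop :=
  ∀ v w, IsVertex K v → IsVertex K w → ∃ φ : V → V, IsIsoMap K K φ ∧ φ v = w

/-! ### The nerve -/

/-- The maximal faces of `K`. -/
def maxFaces (K : Cplx V) : Finset (Finset V) :=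
  K.faces.filter fun σ => ∀ τ ∈ K.faces, σ ⊆ τ → σ = τ

/-- The nerve of `K`: vertices are the maximal simplices of `K`; a nonempty set
of maximal simplices is a face iff the simplices have a common vertex. -/
def nerve (K : Cplx V) : Cplx (Finset V) where
  faces := (maxFaces K).powerset.filter fun S => S.Nonempty ∧ ∃ v, ∀ σ ∈ S, v ∈ σ
  nonempty_of_mem := fun S h => (Finset.mem_filter.mp h).2.1
  down_closed := by
    intro S T hS hsub hne
    rw [Finset.mem_filter, Finset.mem_powerset] at hS ⊢
    obtain ⟨hpow, -, v, hv⟩ := hS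
    exact ⟨hsub.trans hpow, hne, v, fun σ hσ => hv σ (hsub hσ)⟩

/-- Iterated ambient vertex types for iterated nerves. -/
def iterV (V : Type) : ℕ → Type := fun n => Nat.rec V (fun _ T => Finset T) n

/-- The iterated nerve `Nⁿ(K)` (with `N⁰(K) = K`). -/
def iterNerve (K : Cplx V) : (n : ℕ) → Cplx (iterV V n)
  | 0 => K
  | n + 1 => nerve (iterNerve K n)

/-- A complex consists of a single vertex. -/
def IsPoint (K : Cplx V) : Prop := ∃ v, K.faces = {{v}}

/-! ### Joins -/

/-- The left part of a set of vertices of `V ⊕ W`. -/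
def lefts (ρ : Finset (V ⊕ W)) : Finset V :=
  ρ.preimage Sum.inl Sum.inl_injective.injOn

/-- The right part of a set of vertices of `V ⊕ W`. -/
def rights (ρ : Finset (V ⊕ W)) : Finset W :=
  ρ.preimage Sum.inr Sum.inr_injective.injOn

lemma lefts_union_rights (ρ : Finset (V ⊕ W)) :
    (lefts ρ).image Sum.inl ∪ (rights ρ).image Sum.inr = ρ := by
  ext x
  cases x with
  | inl v => simp [lefts, rights]
  | inr w => simp [lefts, rights]

lemma lefts_eq (σ : Finset V) (τ : Finset W) :
    lefts (σ.image Sum.inl ∪ τ.image Sum.inr) = σ := by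
  ext v; simp [lefts]

lemma rights_eq (σ : Finset V) (τ : Finset W) :
    rights (σ.image Sum.inl ∪ τ.image Sum.inr) = τ := by
  ext w; simp [rights]

/-- The faces of the join `K * L`. -/
def joinFaces (K : Cplx V) (L : Cplx W) : Finset (Finset (V ⊕ W)) :=
  (((insert ∅ K.faces) ×ˢ (insert ∅ L.faces)).image
    (fun p => p.1.image Sum.inl ∪ p.2.image Sum.inr)).erase ∅

lemma mem_joinFaces {K : Cplx V} {L : Cplx W} {ρ : Finset (V ⊕ W)} :
    ρ ∈ joinFaces K L ↔
      ρ.Nonempty ∧ lefts ρ ∈ insert ∅ K.faces ∧ rights ρ ∈ insert ∅ L.faces := by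
  unfold joinFaces
  constructor
  · intro h
    have hne : ρ ≠ ∅ := Finset.ne_of_mem_erase h
    have h' := Finset.mem_of_mem_erase h
    rw [Finset.mem_image] at h'
    obtain ⟨p, hp, hρ⟩ := h'
    rw [Finset.mem_product] at hp
    subst hρ
    rw [lefts_eq, rights_eq]
    exact ⟨Finset.nonempty_iff_ne_empty.mpr hne, hp.1, hp.2⟩
  · rintro ⟨hne, hl, hr⟩
    apply Finset.mem_erase.mpr
    refine ⟨Finset.nonempty_iff_ne_empty.mp hne, ?_⟩
    rw [Finset.mem_image]
    exact ⟨(lefts ρ, rights ρ), Finset.mem_product.mpr ⟨hl, hr⟩, lefts_union_rights ρ⟩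

/-- The simplicial join `K * L` of complexes with disjoint vertex sets
(realized on the disjoint sum of the ambient types). -/
def join (K : Cplx V) (L : Cplx W) : Cplx (V ⊕ W) where
  faces := joinFaces K L
  nonempty_of_mem := fun ρ h => (mem_joinFaces.mp h).1
  down_closed := by
    intro ρ ρ' hρ hsub hne
    obtain ⟨-, hl, hr⟩ := mem_joinFaces.mp hρ
    apply mem_joinFaces.mpr
    refine ⟨hne, ?_, ?_⟩
    · rcases Finset.eq_empty_or_nonempty (lefts ρ') with h0 | h1
      · rw [h0]; exact Finset.mem_insert_self _ _
      · have hsubl : lefts ρ' ⊆ lefts ρ := by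
          intro v hv
          simp only [lefts, Finset.mem_preimage] at hv ⊢
          exact hsub hv
        have hKf : lefts ρ ∈ K.faces := by
          rcases Finset.mem_insert.mp hl with h | h
          · obtain ⟨v, hv⟩ := h1
            exact absurd (hsubl hv) (by simp [h])
          · exact h
        exact Finset.mem_insert.mpr (Or.inr (K.down_closed hKf hsubl h1))
    · rcases Finset.eq_empty_or_nonempty (rights ρ') with h0 | h1
      · rw [h0]; exact Finset.mem_insert_self _ _
      · have hsubr : rights ρ' ⊆ rights ρ := by
          intro w hw
          simp only [rights, Finset.mem_preimage] at hw ⊢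
          exact hsub hw
        have hLf : rights ρ ∈ L.faces := by
          rcases Finset.mem_insert.mp hr with h | h
          · obtain ⟨w, hw⟩ := h1
            exact absurd (hsubr hw) (by simp [h])
          · exact h
        exact Finset.mem_insert.mpr (Or.inr (L.down_closed hLf hsubr h1))

/-! ### Finite posets (finite T₀-spaces) -/

variable {P : Type} [PartialOrder P]

/-- `x` is a beat point of the finite poset `X`: the points of `X` strictly below
`x` have a maximum, or the points of `X` strictly above `x` have a minimum. -/
def BeatPoint (X : Finset P) (x : P) : Prop :=
  x ∈ X ∧ ((∃ y ∈ X, y < x ∧ ∀ z ∈ X, z < x → z ≤ y) ∨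
    (∃ y ∈ X, x < y ∧ ∀ z ∈ X, x < z → y ≤ z))

/-- Elementary strong collapse of finite posets: removal of a beat point. -/
def ElemPosetStrongCollapse (X Y : Finset P) : Prop :=
  ∃ x, BeatPoint X x ∧ Y = X.erase x

/-- Strong collapse of finite posets: successive removal of beat points. -/
def PosetStrongCollapses : Finset P → Finset P → Prop :=
  Relation.ReflTransGen ElemPosetStrongCollapse

/-- A finite poset is contractible iff it strong collapses to a point (Stong). -/
def PosetContractible (X : Finset P) : Prop := ∃ x, PosetStrongCollapses X {x}

/-- The link `Ĉ_x` of `x` in `X`: the points of `X` comparable with `x` and distinct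
from it. -/
def posetLink (X : Finset P) (x : P) : Finset P :=
  X.filter fun y => y < x ∨ x < y

/-- `x` is a weak point of `X`: its link is contractible. -/
def WeakPoint (X : Finset P) (x : P) : Prop :=
  x ∈ X ∧ PosetContractible (posetLink X x)

/-- Collapse of finite posets: successive removal of weak points. -/
def PosetCollapses : Finset P → Finset P → Prop :=
  Relation.ReflTransGen (fun X Y => ∃ x, WeakPoint X x ∧ Y = X.erase x)

/-- A finite poset is collapsible if it collapses to a point. -/
def PosetCollapsible (X : Finset P) : Prop := ∃ x, PosetCollapses X {x}

/-- The order complex of a finite poset: faces are the nonempty chains. -/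
def orderCplx (X : Finset P) : Cplx P where
  faces := X.powerset.filter fun σ => σ.Nonempty ∧ IsChain (· ≤ ·) (σ : Set P)
  nonempty_of_mem := fun σ h => (Finset.mem_filter.mp h).2.1
  down_closed := by
    intro σ τ hσ hsub hne
    rw [Finset.mem_filter, Finset.mem_powerset] at hσ ⊢
    exact ⟨hsub.trans hσ.1, hne, hσ.2.2.mono (Finset.coe_subset.mpr hsub)⟩

/-- The barycentric subdivision of a complex: the order complex of its poset of
faces (the face poset, ordered by inclusion). -/
def sd (K : Cplx V) : Cplx (Finset V) := orderCplx K.faces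

/-- Homotopy of order-preserving maps between finite posets: being joined by a
fence in the pointwise order. -/
def PosetHomotopic {X Y : Type} [Preorder X] [Preorder Y] (f g : X →o Y) : Prop :=
  Relation.ReflTransGen (fun p q : X →o Y => p ≤ q ∨ q ≤ p) f g

/-- Homotopy equivalence of finite posets. -/
def PosetHomotopyEquiv (X Y : Type) [Preorder X] [Preorder Y] : Prop :=
  ∃ (f : X →o Y) (g : Y →o X),
    PosetHomotopic (g.comp f) OrderHom.id ∧ PosetHomotopic (f.comp g) OrderHom.id

/-! ### Classical collapses and n-collapses -/

/-- Elementary (classical) simplicial collapse: removal of a free face `σ`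
together with the unique face `τ` properly containing it. -/
def ElemCollapse (K L : Cplx V) : Prop :=
  ∃ σ τ : Finset V, σ ∈ K.faces ∧ τ ∈ K.faces ∧ σ ⊂ τ ∧
    (∀ ρ ∈ K.faces, σ ⊂ ρ → ρ = τ) ∧ L.faces = K.faces \ {σ, τ}

/-- Classical simplicial collapse. -/
def Collapses : Cplx V → Cplx V → Prop := Relation.ReflTransGen ElemCollapse

/-- A complex is collapsible if it collapses to a point. -/
def Collapsible (K : Cplx V) : Prop := ∃ v, Collapses K (pt v)

/-- `n`-collapses: a `0`-collapse is a strong collapse; an `(n+1)`-collapse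
successively deletes vertices whose links are `n`-collapsible. -/
def NCollapses : ℕ → Cplx V → Cplx V → Prop
  | 0 => StrongCollapses
  | n + 1 => Relation.ReflTransGen
      (fun K L => ∃ v, (∃ w, NCollapses n (linkCplx K v) (pt w)) ∧ L = delete K v)

/-- `K` is `n`-collapsible: it `n`-collapses to a single vertex. -/
def NCollapsible (n : ℕ) (K : Cplx V) : Prop := ∃ v, NCollapses n K (pt v)

/-- `K` is non-evasive: it is `n`-collapsible for some `n`. -/
def NonEvasive (K : Cplx V) : Prop := ∃ n, NCollapsible n K

end


variable {V : Type} {P : Type} [PartialOrder P]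

lemma Cplx.ext' {K L : Cplx V} (h : K.faces = L.faces) : K = L := by
  cases K; cases L; simp_all

lemma mem_orderCplx {X : Finset P} {c : Finset P} :
    c ∈ (orderCplx X).faces ↔ c ⊆ X ∧ c.Nonempty ∧ IsChain (· ≤ ·) (c : Set P) := by
  simp [orderCplx]

lemma delete_orderCplx (X : Finset P) (x : P) :
    delete (orderCplx X) x = orderCplx (X.erase x) := by
  apply Cplx.ext'
  ext c
  simp only [delete, Finset.mem_filter, mem_orderCplx, Finset.subset_erase]
  tauto

lemma link_orderCplx (X : Finset P) (x : P) (hx : x ∈ X) :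
    linkCplx (orderCplx X) x = orderCplx (posetLink X x) := by
  apply Cplx.ext'
  ext c
  simp only [linkCplx, link, Finset.mem_filter, mem_orderCplx]
  constructor
  · rintro ⟨⟨hcX, hne, hch⟩, hxc, -, -, hch'⟩
    refine ⟨?_, hne, hch⟩
    intro y hy
    have hcomp : y ≤ x ∨ x ≤ y := by
      rcases hch' (by simp [hy] : (y:P) ∈ ((insert x c : Finset P) : Set P))
        (by simp : (x:P) ∈ ((insert x c : Finset P) : Set P)) (fun h => hxc (h ▸ hy)) with h | h
      · exact Or.inl h
      · exact Or.inr h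
    simp only [posetLink, Finset.mem_filter]
    refine ⟨hcX hy, ?_⟩
    rcases hcomp with h | h
    · exact Or.inl (lt_of_le_of_ne h (fun he => hxc (he ▸ hy)))
    · exact Or.inr (lt_of_le_of_ne h (fun he => hxc (he ▸ hy)))
  · rintro ⟨hcL, hne, hch⟩
    have hsub : c ⊆ X := fun y hy => (Finset.mem_filter.mp (hcL hy)).1
    have hcomp : ∀ y ∈ c, y < x ∨ x < y := fun y hy => (Finset.mem_filter.mp (hcL hy)).2
    have hxc : x ∉ c := fun h => by rcases hcomp x h with h' | h' <;> exact absurd h' (lt_irrefl x)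
    have hch' : IsChain (· ≤ ·) ((insert x c : Finset P) : Set P) := by
      rw [Finset.coe_insert]
      exact hch.insert (fun b hb _ => by rcases hcomp b hb with h | h
                                         · exact Or.inr h.le
                                         · exact Or.inl h.le)
    refine ⟨⟨hsub, hne, hch⟩, hxc, ⟨?_, ⟨x, by simp⟩, hch'⟩⟩
    intro y hy
    rcases Finset.mem_insert.mp hy with h | h
    · exact h ▸ hx
    · exact hsub h

lemma orderCplx_singleton (x : P) : orderCplx ({x} : Finset P) = pt x := by
  apply Cplx.ext'
  ext c
  simp only [mem_orderCplx, pt, Finset.mem_singleton, Finset.subset_singleton_iff]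
  constructor
  · rintro ⟨h | h, hne, -⟩
    · exact absurd h (Finset.nonempty_iff_ne_empty.mp hne)
    · exact h
  · rintro rfl
    exact ⟨Or.inr rfl, ⟨x, by simp⟩, by simp [Set.Subsingleton.isChain, Set.subsingleton_singleton]⟩

lemma beat_elemStrongCollapse {X : Finset P} {x : P} (h : BeatPoint X x) :
    ElemStrongCollapse (orderCplx X) (orderCplx (X.erase x)) := by
  obtain ⟨hx, hbeat⟩ := h
  refine ⟨x, ?_, (delete_orderCplx X x).symm⟩
  obtain ⟨y, hy, hyx, hymax⟩ : ∃ y ∈ X, (y < x ∨ x < y) ∧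
      (∀ z ∈ X, (z < x ∨ x < z) → (z ≤ y ∨ y ≤ z)) := by
    rcases hbeat with ⟨y, hy, hyx, hmax⟩ | ⟨y, hy, hxy, hmin⟩
    · exact ⟨y, hy, Or.inl hyx, fun z hz hc => by
        rcases hc with h | h
        · exact Or.inl (hmax z hz h)
        · exact Or.inr (hyx.le.trans h.le)⟩
    · exact ⟨y, hy, Or.inr hxy, fun z hz hc => by
        rcases hc with h | h
        · exact Or.inl (h.le.trans hxy.le)
        · exact Or.inr (hmin z hz h)⟩
  have hyne : y ≠ x := by rcases hyx with h | h; exacts [h.ne, h.ne']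
  refine ⟨y, ?_, ?_⟩
  · -- {y} ∈ link
    simp only [link, Finset.mem_filter, mem_orderCplx]
    refine ⟨⟨by simpa using hy, ⟨y, by simp⟩, by simp [Set.Subsingleton.isChain, Set.subsingleton_singleton]⟩,
      by simpa using (Ne.symm hyne), ?_, ⟨x, by simp⟩, ?_⟩
    · intro z hz
      rcases Finset.mem_insert.mp hz with h | h
      · exact h ▸ hx
      · simpa using (Finset.mem_singleton.mp h) ▸ hy
    · rw [Finset.coe_insert, Finset.coe_singleton]
      refine (Set.subsingleton_singleton.isChain).insert (fun b hb hne => ?_)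
      rw [Set.mem_singleton_iff] at hb
      subst hb
      rcases hyx with h | h
      · exact Or.inr h.le
      · exact Or.inl h.le
  · intro c hc
    simp only [link, Finset.mem_filter, mem_orderCplx] at hc ⊢
    obtain ⟨⟨hcX, hne, hch⟩, hxc, hinsX, -, hch'⟩ := hc
    have hcomp : ∀ z ∈ c, z < x ∨ x < z := by
      intro z hz
      have := hch' (by simp [hz] : (z:P) ∈ ((insert x c : Finset P) : Set P))
        (by simp : (x:P) ∈ ((insert x c : Finset P) : Set P)) (fun h => hxc (h ▸ hz))
      rcases this with h | h
      · exact Or.inl (lt_of_le_of_ne h (fun he => hxc (he ▸ hz)))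
      · exact Or.inr (lt_of_le_of_ne h (fun he => hxc (he ▸ hz)))
    have hycomp : ∀ z ∈ c, z ≤ y ∨ y ≤ z := fun z hz => hymax z (hcX hz) (hcomp z hz)
    have hchy : IsChain (· ≤ ·) ((insert y c : Finset P) : Set P) := by
      rw [Finset.coe_insert]
      exact hch.insert (fun b hb _ => (hycomp b hb).elim Or.inr Or.inl)
    have hsuby : insert y c ⊆ X := by
      intro z hz
      rcases Finset.mem_insert.mp hz with h | h
      · exact h ▸ hy
      · exact hcX h
    refine ⟨⟨hsuby, ⟨y, by simp⟩, hchy⟩, ?_, ?_, ⟨x, by simp⟩, ?_⟩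
    · intro hmem
      rcases Finset.mem_insert.mp hmem with h | h
      · exact hyne h.symm
      · exact hxc h
    · intro z hz
      rcases Finset.mem_insert.mp hz with h | h
      · exact h ▸ hx
      · exact hsuby h
    · rw [Finset.coe_insert]
      refine hchy.insert (fun b hb _ => ?_)
      rw [Finset.coe_insert, Set.mem_insert_iff] at hb
      rcases hb with rfl | hb
      · rcases hyx with h | h
        exacts [Or.inr h.le, Or.inl h.le]
      · rcases hcomp b hb with h | h
        exacts [Or.inr h.le, Or.inl h.le]

lemma posetSC_orderCplx {X Y : Finset P} (h : PosetStrongCollapses X Y) :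
    StrongCollapses (orderCplx X) (orderCplx Y) := by
  induction h with
  | refl => exact Relation.ReflTransGen.refl
  | tail _ hstep ih =>
      obtain ⟨x, hbeat, rfl⟩ := hstep
      exact ih.tail (beat_elemStrongCollapse hbeat)

lemma dismantle_to_fixed (f : P → P) (X F : Finset P)
    (hF : ∀ ρ, ρ ∈ F ↔ ρ ∈ X ∧ f ρ = ρ)
    (hmem : ∀ ρ ∈ X, f ρ ∈ X)
    (hmono : ∀ ρ ∈ X, ∀ ρ' ∈ X, ρ ≤ ρ' → f ρ ≤ f ρ')
    (hle : ∀ ρ ∈ X, ρ ≤ f ρ)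
    (hidem : ∀ ρ ∈ X, f (f ρ) = f ρ) :
    PosetStrongCollapses X F := by
  induction X using Finset.strongInduction generalizing F with
  | _ X ih =>
    by_cases hS : (X.filter fun ρ => f ρ ≠ ρ).Nonempty
    · obtain ⟨x, hxS, hxmax⟩ : ∃ x ∈ X.filter (fun ρ => f ρ ≠ ρ), ∀ z ∈ X.filter (fun ρ => f ρ ≠ ρ), ¬x < z := by
        obtain ⟨x, hx⟩ := Finset.exists_maximal hS
        exact ⟨x, hx.1, fun z hz => hx.not_gt hz⟩
      rw [Finset.mem_filter] at hxS
      obtain ⟨hxX, hxfix⟩ := hxS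
      have hlt : x < f x := lt_of_le_of_ne (hle x hxX) (Ne.symm hxfix)
      have hbeat : BeatPoint X x := by
        refine ⟨hxX, Or.inr ⟨f x, hmem x hxX, hlt, ?_⟩⟩
        intro z hz hxz
        have hzfix : f z = z := by
          by_contra hne
          exact hxmax z (Finset.mem_filter.mpr ⟨hz, hne⟩) hxz
        calc f x ≤ f z := hmono x hxX z hz hxz.le
        _ = z := hzfix
      have hXe : X.erase x ⊂ X := Finset.erase_ssubset hxX
      have hF' : ∀ ρ, ρ ∈ F ↔ ρ ∈ X.erase x ∧ f ρ = ρ := by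
        intro ρ
        rw [hF, Finset.mem_erase]
        constructor
        · rintro ⟨hρ, hfρ⟩
          exact ⟨⟨fun he => hxfix (he ▸ hfρ), hρ⟩, hfρ⟩
        · rintro ⟨⟨-, hρ⟩, hfρ⟩
          exact ⟨hρ, hfρ⟩
      have hmem' : ∀ ρ ∈ X.erase x, f ρ ∈ X.erase x := by
        intro ρ hρ
        rw [Finset.mem_erase] at hρ ⊢
        refine ⟨?_, hmem ρ hρ.2⟩
        intro hfx
        exact hxfix (hfx ▸ hidem ρ hρ.2)
      have htail := ih (X.erase x) hXe F hF' hmem'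
        (fun ρ hρ ρ' hρ' => hmono ρ (Finset.mem_of_mem_erase hρ) ρ' (Finset.mem_of_mem_erase hρ'))
        (fun ρ hρ => hle ρ (Finset.mem_of_mem_erase hρ))
        (fun ρ hρ => hidem ρ (Finset.mem_of_mem_erase hρ))
      exact Relation.ReflTransGen.head ⟨x, hbeat, rfl⟩ htail
    · have hfix : ∀ ρ ∈ X, f ρ = ρ := by
        intro ρ hρ
        by_contra hne
        exact hS ⟨ρ, Finset.mem_filter.mpr ⟨hρ, hne⟩⟩
      have : F = X := by
        ext z
        rw [hF]
        exact ⟨fun h => h.1, fun h => ⟨h, hfix z h⟩⟩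
      rw [this]
      exact Relation.ReflTransGen.refl

lemma dismantle_to_fixed_dn (f : P → P) (X F : Finset P)
    (hF : ∀ ρ, ρ ∈ F ↔ ρ ∈ X ∧ f ρ = ρ)
    (hmem : ∀ ρ ∈ X, f ρ ∈ X)
    (hmono : ∀ ρ ∈ X, ∀ ρ' ∈ X, ρ ≤ ρ' → f ρ ≤ f ρ')
    (hle : ∀ ρ ∈ X, f ρ ≤ ρ)
    (hidem : ∀ ρ ∈ X, f (f ρ) = f ρ) :
    PosetStrongCollapses X F := by
  induction X using Finset.strongInduction generalizing F with
  | _ X ih =>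
    by_cases hS : (X.filter fun ρ => f ρ ≠ ρ).Nonempty
    · obtain ⟨x, hxS, hxmin⟩ : ∃ x ∈ X.filter (fun ρ => f ρ ≠ ρ), ∀ z ∈ X.filter (fun ρ => f ρ ≠ ρ), ¬z < x := by
        obtain ⟨x, hx⟩ := Finset.exists_minimal hS
        exact ⟨x, hx.1, fun z hz => hx.not_lt hz⟩
      rw [Finset.mem_filter] at hxS
      obtain ⟨hxX, hxfix⟩ := hxS
      have hlt : f x < x := lt_of_le_of_ne (hle x hxX) hxfix
      have hbeat : BeatPoint X x := by
        refine ⟨hxX, Or.inl ⟨f x, hmem x hxX, hlt, ?_⟩⟩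
        intro z hz hzx
        have hzfix : f z = z := by
          by_contra hne
          exact hxmin z (Finset.mem_filter.mpr ⟨hz, hne⟩) hzx
        calc z = f z := hzfix.symm
        _ ≤ f x := hmono z hz x hxX hzx.le
      have hXe : X.erase x ⊂ X := Finset.erase_ssubset hxX
      have hF' : ∀ ρ, ρ ∈ F ↔ ρ ∈ X.erase x ∧ f ρ = ρ := by
        intro ρ
        rw [hF, Finset.mem_erase]
        constructor
        · rintro ⟨hρ, hfρ⟩
          exact ⟨⟨fun he => hxfix (he ▸ hfρ), hρ⟩, hfρ⟩
        · rintro ⟨⟨-, hρ⟩, hfρ⟩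
          exact ⟨hρ, hfρ⟩
      have hmem' : ∀ ρ ∈ X.erase x, f ρ ∈ X.erase x := by
        intro ρ hρ
        rw [Finset.mem_erase] at hρ ⊢
        refine ⟨?_, hmem ρ hρ.2⟩
        intro hfx
        exact hxfix (hfx ▸ hidem ρ hρ.2)
      have htail := ih (X.erase x) hXe F hF' hmem'
        (fun ρ hρ ρ' hρ' => hmono ρ (Finset.mem_of_mem_erase hρ) ρ' (Finset.mem_of_mem_erase hρ'))
        (fun ρ hρ => hle ρ (Finset.mem_of_mem_erase hρ))
        (fun ρ hρ => hidem ρ (Finset.mem_of_mem_erase hρ))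
      exact Relation.ReflTransGen.head ⟨x, hbeat, rfl⟩ htail
    · have hfix : ∀ ρ ∈ X, f ρ = ρ := by
        intro ρ hρ
        by_contra hne
        exact hS ⟨ρ, Finset.mem_filter.mpr ⟨hρ, hne⟩⟩
      have : F = X := by
        ext z
        rw [hF]
        exact ⟨fun h => h.1, fun h => ⟨h, hfix z h⟩⟩
      rw [this]
      exact Relation.ReflTransGen.refl

lemma dismantle_max {X : Finset P} {m : P} (hm : m ∈ X) (h : ∀ z ∈ X, z ≤ m) :
    PosetStrongCollapses X {m} :=
  dismantle_to_fixed (fun _ => m) X {m}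
    (fun ρ => by
      simp only [Finset.mem_singleton]
      exact ⟨fun he => ⟨he ▸ hm, he.symm⟩, fun h => h.2.symm⟩)
    (fun ρ _ => hm) (fun _ _ _ _ _ => le_rfl) h (fun _ _ => rfl)

lemma dismantle_min {X : Finset P} {m : P} (hm : m ∈ X) (h : ∀ z ∈ X, m ≤ z) :
    PosetStrongCollapses X {m} :=
  dismantle_to_fixed_dn (fun _ => m) X {m}
    (fun ρ => by
      simp only [Finset.mem_singleton]
      exact ⟨fun he => ⟨he ▸ hm, he.symm⟩, fun h => h.2.symm⟩)
    (fun ρ _ => hm) (fun _ _ _ _ _ => le_rfl) h (fun _ _ => rfl)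
lemma elem_step {K L : Cplx V} (h : ElemCollapse K L) : NCollapses 1 (sd K) (sd L) := by
  obtain ⟨σ, τ, hσ, hτ, hst, hfree, hL⟩ := h
  have hsub : σ ⊆ τ := hst.subset
  obtain ⟨x, hxτ, hxσ⟩ := Finset.exists_of_ssubset hst
  have hτmax : ∀ ρ ∈ K.faces, τ ⊆ ρ → ρ = τ := fun ρ hρ hs =>
    hfree ρ hρ (ssubset_of_ssubset_of_subset hst hs)
  have hτσ : σ ≠ τ := hst.ne
  -- step 1 : link of σ in sd K strong collapses to τ
  obtain ⟨Pσ, hPiff, hlink1⟩ : ∃ Pσ : Finset (Finset V),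
      (∀ ρ, ρ ∈ Pσ ↔ ρ ∈ K.faces ∧ (ρ ⊂ σ ∨ σ ⊂ ρ)) ∧
        linkCplx (sd K) σ = orderCplx Pσ :=
    ⟨_, fun ρ => by simp [posetLink, Finset.lt_iff_ssubset], link_orderCplx K.faces σ hσ⟩
  have hτL : τ ∈ Pσ := (hPiff τ).mpr ⟨hτ, Or.inr hst⟩
  have hmax1 : ∀ z ∈ Pσ, z ≤ τ := by
    intro z hz
    rw [hPiff] at hz
    rcases hz.2 with h | h
    · exact le_trans (Finset.le_iff_subset.mpr h.subset) (Finset.le_iff_subset.mpr hsub)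
    · exact le_of_eq (hfree z hz.1 h)
  have h1 : StrongCollapses (linkCplx (sd K) σ) (pt τ) := by
    rw [hlink1, ← orderCplx_singleton τ]
    exact posetSC_orderCplx (dismantle_max hτL hmax1)
  -- the intermediate complex
  obtain ⟨E, hEiff, hd1⟩ : ∃ E : Finset (Finset V),
      (∀ ρ, ρ ∈ E ↔ ρ ∈ K.faces ∧ ρ ≠ σ) ∧ delete (sd K) σ = orderCplx E :=
    ⟨_, fun ρ => by simp [Finset.mem_erase, and_comm], delete_orderCplx K.faces σ⟩
  have hτe : τ ∈ E := (hEiff τ).mpr ⟨hτ, Ne.symm hτσ⟩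
  -- step 2 : link of τ in orderCplx E
  obtain ⟨Q, hQpre, hlink2⟩ : ∃ Q : Finset (Finset V),
      (∀ ρ, ρ ∈ Q ↔ ρ ∈ E ∧ (ρ ⊂ τ ∨ τ ⊂ ρ)) ∧
        linkCplx (orderCplx E) τ = orderCplx Q :=
    ⟨_, fun ρ => by simp [posetLink, Finset.lt_iff_ssubset], link_orderCplx E τ hτe⟩
  have hQmem : ∀ ρ, ρ ∈ Q ↔ (ρ ∈ K.faces ∧ ρ ≠ σ ∧ ρ ⊂ τ) := by
    intro ρ
    rw [hQpre, hEiff]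
    constructor
    · rintro ⟨⟨hρK, hρσ⟩, hc⟩
      refine ⟨hρK, hρσ, ?_⟩
      rcases hc with h | h
      · exact h
      · exact absurd (hτmax ρ hρK h.subset) h.ne'
    · rintro ⟨hρK, hρσ, hρτ⟩
      exact ⟨⟨hρK, hρσ⟩, Or.inl hρτ⟩
  have hQf : ∀ ρ ∈ Q, insert x ρ ∈ Q := by
    intro ρ hρ
    rw [hQmem] at hρ ⊢
    obtain ⟨hρK, hρσ, hρτ⟩ := hρ
    have hsubτ : insert x ρ ⊆ τ := Finset.insert_subset hxτ hρτ.subset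
    refine ⟨K.down_closed hτ hsubτ ⟨x, Finset.mem_insert_self _ _⟩,
      fun he => hxσ (he ▸ Finset.mem_insert_self x ρ), ?_⟩
    refine Finset.ssubset_iff_subset_ne.mpr ⟨hsubτ, ?_⟩
    intro heq
    have hσρ : σ ⊆ ρ := by
      intro a ha
      have haτ : a ∈ τ := hsub ha
      rw [← heq] at haτ
      rcases Finset.mem_insert.mp haτ with h | h
      · exact absurd (h ▸ ha) hxσ
      · exact h
    have hss : σ ⊂ ρ := Finset.ssubset_iff_subset_ne.mpr ⟨hσρ, fun he => hρσ he.symm⟩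
    exact absurd (hfree ρ hρK hss) (Finset.ssubset_iff_subset_ne.mp hρτ).2
  obtain ⟨Fx, hFiff⟩ : ∃ Fx : Finset (Finset V),
      ∀ ρ, ρ ∈ Fx ↔ ρ ∈ Q ∧ insert x ρ = ρ :=
    ⟨Q.filter fun ρ => insert x ρ = ρ, fun ρ => Finset.mem_filter⟩
  have hQfix := dismantle_to_fixed (fun ρ => insert x ρ) Q Fx hFiff hQf
    (fun ρ _ ρ' _ hle => Finset.le_iff_subset.mpr
      (Finset.insert_subset_insert x (Finset.le_iff_subset.mp hle)))
    (fun ρ _ => Finset.le_iff_subset.mpr (Finset.subset_insert x ρ))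
    (fun ρ _ => Finset.insert_idem x ρ)
  have hxQ : ({x} : Finset V) ∈ Q := by
    rw [hQmem]
    refine ⟨K.down_closed hτ (Finset.singleton_subset_iff.mpr hxτ) ⟨x, by simp⟩,
      fun he => hxσ (he ▸ Finset.mem_singleton_self x), ?_⟩
    refine Finset.ssubset_iff_subset_ne.mpr ⟨Finset.singleton_subset_iff.mpr hxτ, ?_⟩
    intro he
    have hσx : σ ⊆ {x} := he ▸ hsub
    rcases Finset.subset_singleton_iff.mp hσx with h | h
    · exact (K.nonempty_of_mem hσ).ne_empty h
    · exact hxσ (h ▸ Finset.mem_singleton_self x)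
  have hQcol : PosetStrongCollapses Q {({x} : Finset V)} := by
    refine Relation.ReflTransGen.trans hQfix (dismantle_min ?_ ?_)
    · exact (hFiff _).mpr ⟨hxQ, by simp⟩
    · intro z hz
      obtain ⟨-, hfz⟩ := (hFiff z).mp hz
      exact Finset.le_iff_subset.mpr
        (Finset.singleton_subset_iff.mpr (Finset.insert_eq_self.mp hfz))
  have h2 : StrongCollapses (linkCplx (orderCplx E) τ) (pt ({x} : Finset V)) := by
    rw [hlink2, ← orderCplx_singleton]
    exact posetSC_orderCplx hQcol
  -- assemble
  have hd2 : delete (orderCplx E) τ = sd L := by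
    rw [delete_orderCplx]
    show orderCplx _ = orderCplx L.faces
    congr 1
    rw [hL]
    ext z
    simp only [Finset.mem_erase, Finset.mem_sdiff, Finset.mem_insert, Finset.mem_singleton, hEiff]
    tauto
  show Relation.ReflTransGen
    (fun A B => ∃ v, (∃ w, NCollapses 0 (linkCplx A v) (pt w)) ∧ B = delete A v) (sd K) (sd L)
  exact Relation.ReflTransGen.head ⟨σ, ⟨τ, h1⟩, hd1.symm⟩
    (Relation.ReflTransGen.single ⟨τ, ⟨{x}, h2⟩, hd2.symm⟩)
/-- a classical collapse `K ↘ L` induces a 1-collapse `K' ↘¹ L'` of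
barycentric subdivisions; in particular if `K` is collapsible then `K'` is
1-collapsible, hence non-evasive. -/
theorem stmt18 {V : Type} :
    (∀ K L : Cplx V, Collapses K L → NCollapses 1 (sd K) (sd L)) ∧
    (∀ K : Cplx V, Collapsible K → NCollapsible 1 (sd K) ∧ NonEvasive (sd K)) := by
  have main : ∀ K L : Cplx V, Collapses K L → NCollapses 1 (sd K) (sd L) := by
    intro K L h
    induction h with
    | refl => exact Relation.ReflTransGen.refl
    | tail _ hstep ih => exact Relation.ReflTransGen.trans ih (elem_step hstep)
  refine ⟨main, fun K hK => ?_⟩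
  obtain ⟨v, hv⟩ := hK
  have h := main K (pt v) hv
  have hsd : sd (pt v) = pt ({v} : Finset V) := orderCplx_singleton ({v} : Finset V)
  rw [hsd] at h
  exact ⟨⟨{v}, h⟩, 1, ⟨{v}, h⟩⟩

end StrongHomotopy
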